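/- Drift condition implies bounded time-average queue size: suppose nonnegative sequences (L_t) with L_0 = 0, (q_t), and a penalty sequence (r_t) bounded below by r_min, satisfy L_{t+1} − L_t + V r_t ≤ B + V r* − ε q_t for all t, with ε > 0, V ≥ 0, B ≥ 0. Then for every T ≥ 1, (1/T) ∑_{t=0}^{T−1} q_t ≤ (B + V(r* − r_min))/ε. -/
import Mathlib

theorem drift_plus_penalty_avg_queue (L q r : ℕ → ℝ) (B V rstar rmin ε : ℝ)
    (hB : 0 ≤ B) (hV : 0 ≤ V) (hε : 0 < ε) (hL : ∀ t, 0 ≤ L t) (hL0 : L 0 = 0)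
    (hq : ∀ t, 0 ≤ q t) (hr : ∀ t, rmin ≤ r t)
    (hdrift : ∀ t, L (t + 1) - L t + V * r t ≤ B + V * rstar - ε * q t) :
    ∀ T : ℕ, 1 ≤ T →
      (1 / (T : ℝ)) * ∑ t ∈ Finset.range T, q t ≤ (B + V * (rstar - rmin)) / ε := by
  intro T hT
  have hTpos : (0:ℝ) < T := by exact_mod_cast hT
  have hsum : ∑ t ∈ Finset.range T, (L (t+1) - L t + V * r t)
      ≤ ∑ t ∈ Finset.range T, (B + V * rstar - ε * q t) :=
    Finset.sum_le_sum fun t _ => hdrift t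
  have htel : ∑ t ∈ Finset.range T, (L (t+1) - L t) = L T - L 0 :=
    Finset.sum_range_sub L T
  have hrsum : (T:ℝ) * (V * rmin) ≤ ∑ t ∈ Finset.range T, V * r t := by
    calc (T:ℝ) * (V * rmin) = ∑ _t ∈ Finset.range T, V * rmin := by
          rw [Finset.sum_const, Finset.card_range, nsmul_eq_mul]
      _ ≤ _ := Finset.sum_le_sum fun t _ => mul_le_mul_of_nonneg_left (hr t) hV
  have key : ε * ∑ t ∈ Finset.range T, q t ≤ (T:ℝ) * (B + V * (rstar - rmin)) := by
    have h1 : ∑ t ∈ Finset.range T, (L (t+1) - L t + V * r t)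
        = L T - L 0 + ∑ t ∈ Finset.range T, V * r t := by
      rw [Finset.sum_add_distrib, htel]
    have h2 : ∑ t ∈ Finset.range T, (B + V * rstar - ε * q t)
        = (T:ℝ) * (B + V * rstar) - ε * ∑ t ∈ Finset.range T, q t := by
      rw [Finset.sum_sub_distrib, Finset.sum_const, Finset.card_range, nsmul_eq_mul,
        ← Finset.mul_sum]
    rw [h1, h2, hL0] at hsum
    have := hL T
    nlinarith [hrsum]
  rw [one_div, div_eq_mul_inv]
  have h3 : ∑ t ∈ Finset.range T, q t ≤ (T:ℝ) * ((B + V * (rstar - rmin)) * ε⁻¹) := by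
    calc ∑ t ∈ Finset.range T, q t = ε⁻¹ * (ε * ∑ t ∈ Finset.range T, q t) := by
          field_simp
      _ ≤ ε⁻¹ * ((T:ℝ) * (B + V * (rstar - rmin))) :=
          mul_le_mul_of_nonneg_left key (by positivity)
      _ = (T:ℝ) * ((B + V * (rstar - rmin)) * ε⁻¹) := by ring
  calc (T:ℝ)⁻¹ * ∑ t ∈ Finset.range T, q t
      ≤ (T:ℝ)⁻¹ * ((T:ℝ) * ((B + V * (rstar - rmin)) * ε⁻¹)) := by
        exact mul_le_mul_of_nonneg_left h3 (by positivity)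
    _ = (B + V * (rstar - rmin)) * ε⁻¹ := by field_simp
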